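/- Let f_1 < f_c < f_M be positive reals with f_1 + f_M = 2f_c, set ξ_m = f_m/f_c for a family f_1 ≤ f_m ≤ f_M, and fix θ_k ∈ ℝ, α_k > 0. Define φ_k = θ_k + (1 − ξ_1)α_k and θ̄_m = θ_k + (1 − ξ_1)α_k + (2ξ_M ξ_1 (ξ_m − 1))/(ξ_m (ξ_M − ξ_1)) · α_k. Then θ̄_m is strictly increasing in ξ_m on (0, ∞), θ̄_1 = θ_k − α_k when ξ_m = ξ_1, and θ̄_M = θ_k + α_k when ξ_m = ξ_M. Hence as ξ_m ranges over [ξ_1, ξ_M], θ̄_m ranges over exactly [θ_k − α_k, θ_k + α_k]. -/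
import Mathlib


open Real Set

/-- the beam zooming directions θ̄(ξ) are strictly increasing in ξ,
equal θ_k − α_k and θ_k + α_k at the band edges ξ_1, ξ_M, and sweep exactly the
angular tracking range [θ_k − α_k, θ_k + α_k] as ξ ranges over [ξ_1, ξ_M]. -/
theorem beam_zooming_coverage
    (f1 fc fM : ℝ) (hf1 : 0 < f1) (h1c : f1 < fc) (hcM : fc < fM)
    (hsym : f1 + fM = 2 * fc)
    (θk αk : ℝ) (hαk : 0 < αk)
    (ξ1 ξM : ℝ) (hξ1 : ξ1 = f1 / fc) (hξM : ξM = fM / fc)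
    (θbar : ℝ → ℝ)
    (hθbar : ∀ ξ : ℝ, θbar ξ =
      θk + (1 - ξ1) * αk + (2 * ξM * ξ1 * (ξ - 1)) / (ξ * (ξM - ξ1)) * αk) :
    StrictMonoOn θbar (Ioi (0 : ℝ)) ∧
    θbar ξ1 = θk - αk ∧
    θbar ξM = θk + αk ∧
    θbar '' Icc ξ1 ξM = Icc (θk - αk) (θk + αk) := by
  have hfc : 0 < fc := hf1.trans h1c
  have hξ1pos : 0 < ξ1 := by rw [hξ1]; positivity
  have hξ1lt : ξ1 < 1 := by rw [hξ1, div_lt_one hfc]; exact h1c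
  have hξMgt : 1 < ξM := by rw [hξM, lt_div_iff₀ hfc]; linarith
  have hsum : ξ1 + ξM = 2 := by
    rw [hξ1, hξM]
    field_simp
    linarith
  have hden : 0 < ξM - ξ1 := by linarith
  have hmono : StrictMonoOn θbar (Ioi (0 : ℝ)) := by
    intro x hx y hy hxy
    rw [hθbar, hθbar]
    have hx0 : 0 < x := hx
    have hy0 : 0 < y := hy
    have h1 : (2 * ξM * ξ1 * (x - 1)) / (x * (ξM - ξ1)) <
        (2 * ξM * ξ1 * (y - 1)) / (y * (ξM - ξ1)) := by
      rw [div_lt_div_iff₀ (by positivity) (by positivity)]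
      nlinarith [mul_pos (mul_pos hξ1pos (by linarith : (0:ℝ) < ξM)) hden,
        mul_pos (mul_pos hξ1pos (by linarith : (0:ℝ) < ξM)) (sub_pos.mpr hxy)]
    nlinarith
  have hv1 : θbar ξ1 = θk - αk := by
    rw [hθbar]
    have h : (2 * ξM * ξ1 * (ξ1 - 1)) / (ξ1 * (ξM - ξ1)) = ξ1 - 2 := by
      rw [div_eq_iff (by positivity)]
      linear_combination (ξ1 ^ 2) * hsum
    rw [h]; ring
  have hvM : θbar ξM = θk + αk := by
    rw [hθbar]
    have hξMpos : 0 < ξM := by linarith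
    have h : (2 * ξM * ξ1 * (ξM - 1)) / (ξM * (ξM - ξ1)) = ξ1 := by
      rw [div_eq_iff (by positivity)]
      linear_combination (ξ1 * ξM) * hsum
    rw [h]; ring
  refine ⟨hmono, hv1, hvM, ?_⟩
  have hsub : Icc ξ1 ξM ⊆ Ioi (0 : ℝ) := fun x hx => lt_of_lt_of_le hξ1pos hx.1
  have hcont : ContinuousOn θbar (Icc ξ1 ξM) := by
    rw [funext hθbar]
    refine ContinuousOn.add continuousOn_const
      (ContinuousOn.mul (ContinuousOn.div (by fun_prop) (by fun_prop) ?_) continuousOn_const)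
    intro x hx
    have hx0 : 0 < x := lt_of_lt_of_le hξ1pos hx.1
    exact mul_ne_zero (ne_of_gt hx0) (ne_of_gt hden)
  apply Subset.antisymm
  · rintro y ⟨x, hx, rfl⟩
    have hle : ξ1 ≤ ξM := by linarith
    constructor
    · rw [← hv1]
      exact hmono.monotoneOn (hsub ⟨le_refl ξ1, hle⟩) (hsub hx) hx.1
    · rw [← hvM]
      exact hmono.monotoneOn (hsub hx) (hsub ⟨hle, le_refl ξM⟩) hx.2
  · have := intermediate_value_Icc (by linarith : ξ1 ≤ ξM) hcont
    rw [hv1, hvM] at this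
    exact this
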